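/- Let q : ℝ^d → ℝ be an everywhere positive probability density with respect to Lebesgue measure and let p : ℝ^d → ℝ be an everywhere positive continuous probability density. Let T : ℝ^d → ℝ^d be a C¹ diffeomorphism with Jacobian matrix DT(λ) at λ. Assume KL(μ_q ‖ μ_p) and KL(T#μ_q ‖ μ_p) are finite and that λ ↦ (log p(λ) − log p(T(λ)) − log |det DT(λ)|) q(λ) is Lebesgue integrable. Then KL(T#μ_q ‖ μ_p) − KL(μ_q ‖ μ_p) = ∫ ( log p(λ) − log p(T(λ)) − log |det DT(λ)| ) q(λ) dλ. -/

import Mathlib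

open MeasureTheory
open scoped Classical

/-- The Kullback–Leibler divergence between two measures: `∫ log (dμ/dν) dμ`
when `μ ≪ ν` and the log-likelihood ratio is integrable, `+∞` otherwise. -/
noncomputable def klDiv {α : Type*} [MeasurableSpace α] (μ ν : Measure α) : EReal :=
  if μ ≪ ν ∧ Integrable (llr μ ν) μ then ((∫ x, llr μ ν x ∂μ : ℝ) : EReal) else ⊤

/-- The measure on `ℝ^d` with density `f` with respect to Lebesgue measure. -/
noncomputable def densityMeasure {d : ℕ} (f : EuclideanSpace ℝ (Fin d) → ℝ) :
    Measure (EuclideanSpace ℝ (Fin d)) :=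
  volume.withDensity fun x => ENNReal.ofReal (f x)

/-!
Both divergences are integrals of log-likelihood ratios, which for measures with positive
densities are `log q - log p` and `log g - log p`, where `g = (q ∘ T⁻¹) |det DT⁻¹|` is the
density of `T#μ_q` by the change-of-variables formula. Integrating the second against
`T#μ_q` is integrating its composition with `T` against `μ_q`, and
`g (T λ) = q λ / |det DT λ|`, so in the difference `log q` cancels.
-/

section KLDivergence

variable {α : Type*} [MeasurableSpace α] {μ ν : Measure α}

lemma klDiv_ne_top_iff : klDiv μ ν ≠ ⊤ ↔ μ ≪ ν ∧ Integrable (llr μ ν) μ := by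
  by_cases h : μ ≪ ν ∧ Integrable (llr μ ν) μ <;> simp [klDiv, h]

lemma toReal_klDiv_of_ne_top (h : klDiv μ ν ≠ ⊤) :
    (klDiv μ ν).toReal = ∫ x, llr μ ν x ∂μ := by
  rw [klDiv, if_pos (klDiv_ne_top_iff.mp h), EReal.toReal_coe]

end KLDivergence

section WithDensity

variable {α : Type*} [MeasurableSpace α] (μ : Measure α)

lemma llr_withDensity_ofReal_ae_eq [SigmaFinite μ] {f g : α → ℝ} (hf : AEMeasurable f μ)
    (hg : AEMeasurable g μ) (hf_pos : ∀ᵐ x ∂μ, 0 < f x) (hg_pos : ∀ᵐ x ∂μ, 0 < g x) :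
    llr (μ.withDensity fun x => ENNReal.ofReal (f x))
        (μ.withDensity fun x => ENNReal.ofReal (g x))
      =ᵐ[μ] fun x => Real.log (f x) - Real.log (g x) := by
  have h_right := Measure.rnDeriv_withDensity_right
    (μ.withDensity fun x => ENNReal.ofReal (f x)) μ hg.ennreal_ofReal
    (hg_pos.mono fun x hx => by simpa using hx) (ae_of_all _ fun _ => ENNReal.ofReal_ne_top)
  have h_left := Measure.rnDeriv_withDensity₀ μ hf.ennreal_ofReal
  filter_upwards [h_right, h_left, hf_pos, hg_pos] with x hx_right hx_left hfx hgx
  rw [llr, hx_right, hx_left, ENNReal.toReal_mul, ENNReal.toReal_inv,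
    ENNReal.toReal_ofReal hgx.le, ENNReal.toReal_ofReal hfx.le,
    Real.log_mul (inv_ne_zero hgx.ne') hfx.ne', Real.log_inv]
  ring

lemma integral_withDensity_ofReal_eq_integral_mul {f : α → ℝ} (hf : Measurable f)
    (hf_nonneg : ∀ x, 0 ≤ f x) (h : α → ℝ) :
    ∫ x, h x ∂μ.withDensity (fun x => ENNReal.ofReal (f x)) = ∫ x, h x * f x ∂μ := by
  rw [integral_withDensity_eq_integral_toReal_smul hf.ennreal_ofReal
    (ae_of_all _ fun _ => ENNReal.ofReal_lt_top)]
  simp only [ENNReal.toReal_ofReal (hf_nonneg _), smul_eq_mul, mul_comm]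

end WithDensity

section ChangeOfVariables

variable {E : Type*} [NormedAddCommGroup E] [NormedSpace ℝ E] {T S : E → E}

lemma det_fderiv_mul_det_fderiv_of_leftInverse (hS : Differentiable ℝ S)
    (hT : Differentiable ℝ T) (hST : Function.LeftInverse S T) (x : E) :
    (fderiv ℝ S (T x)).det * (fderiv ℝ T x).det = 1 := by
  have h_comp : (fderiv ℝ S (T x)).comp (fderiv ℝ T x) = ContinuousLinearMap.id ℝ E := by
    rw [← fderiv_comp x (hS _) (hT _), hST.comp_eq_id, fderiv_id]
  simpa [ContinuousLinearMap.det, LinearMap.det_comp] using congrArg ContinuousLinearMap.det h_comp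

lemma det_fderiv_ne_zero_of_leftInverse (hS : Differentiable ℝ S)
    (hT : Differentiable ℝ T) (hST : Function.LeftInverse S T) (x : E) :
    (fderiv ℝ T x).det ≠ 0 :=
  right_ne_zero_of_mul_eq_one (det_fderiv_mul_det_fderiv_of_leftInverse hS hT hST x)

variable [FiniteDimensional ℝ E] [MeasurableSpace E] [BorelSpace E]

lemma measurable_det_fderiv (S : E → E) : Measurable fun y => (fderiv ℝ S y).det := by
  borelize (E →L[ℝ] E)
  exact ContinuousLinearMap.continuous_det.measurable.comp (measurable_fderiv ℝ S)

variable (μ : Measure E) [μ.IsAddHaarMeasure]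

lemma map_withDensity_ofReal_eq_withDensity (f : E → ℝ) (hT : Measurable T)
    (hS : Differentiable ℝ S) (hST : Function.LeftInverse S T) (hTS : Function.RightInverse S T) :
    (μ.withDensity fun x => ENNReal.ofReal (f x)).map T
      = μ.withDensity fun y => ENNReal.ofReal (f (S y) * |(fderiv ℝ S y).det|) := by
  ext s hs
  rw [Measure.map_apply hT hs, withDensity_apply _ (hT hs), withDensity_apply _ hs,
    ← Set.image_eq_preimage_of_inverse hTS hST,
    lintegral_image_eq_lintegral_abs_det_fderiv_mul μ hs
      (fun y _ => (hS y).hasFDerivAt.hasFDerivWithinAt) hTS.injective.injOn]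
  refine setLIntegral_congr_fun hs fun y _ => ?_
  rw [mul_comm, ENNReal.ofReal_mul' (abs_nonneg _)]

lemma llr_map_withDensity_ofReal_comp_ae_eq {f g : E → ℝ} (hf : Measurable f)
    (hg : Measurable g) (hf_pos : ∀ x, 0 < f x) (hg_pos : ∀ x, 0 < g x)
    (hT : Differentiable ℝ T) (hS : Differentiable ℝ S)
    (hST : Function.LeftInverse S T) (hTS : Function.RightInverse S T) :
    ∀ᵐ x ∂μ.withDensity (fun x => ENNReal.ofReal (f x)),
      llr ((μ.withDensity fun x => ENNReal.ofReal (f x)).map T)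
          (μ.withDensity fun x => ENNReal.ofReal (g x)) (T x)
        = Real.log (f x) - Real.log |(fderiv ℝ T x).det| - Real.log (g (T x)) := by
  set f_T := fun y => f (S y) * |(fderiv ℝ S y).det|
  have hf_T_meas : Measurable f_T :=
    (hf.comp hS.continuous.measurable).mul (measurable_det_fderiv S).abs
  have hf_T_pos (y : E) : 0 < f_T y :=
    mul_pos (hf_pos _) (abs_pos.mpr (det_fderiv_ne_zero_of_leftInverse hT hS hTS y))
  have h_llr : llr ((μ.withDensity fun x => ENNReal.ofReal (f x)).map T)
      (μ.withDensity fun x => ENNReal.ofReal (g x))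
      =ᵐ[(μ.withDensity fun x => ENNReal.ofReal (f x)).map T]
        fun y => Real.log (f_T y) - Real.log (g y) := by
    rw [map_withDensity_ofReal_eq_withDensity μ f hT.continuous.measurable hS hST hTS]
    exact (withDensity_absolutelyContinuous _ _).ae_eq <| llr_withDensity_ofReal_ae_eq μ
      hf_T_meas.aemeasurable hg.aemeasurable (ae_of_all _ hf_T_pos) (ae_of_all _ hg_pos)
  filter_upwards [ae_of_ae_map hT.continuous.aemeasurable h_llr] with x hx
  have h_det_inv := eq_inv_of_mul_eq_one_left
    (det_fderiv_mul_det_fderiv_of_leftInverse hS hT hST x)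
  have h_det_ne := det_fderiv_ne_zero_of_leftInverse hS hT hST x
  simp only [hx, f_T, hST x, h_det_inv, abs_inv]
  rw [Real.log_mul (hf_pos x).ne' (by positivity), Real.log_inv]
  ring

end ChangeOfVariables

theorem klDiv_pushforward_sub_klDiv_eq_general {d : ℕ}
    (q p : EuclideanSpace ℝ (Fin d) → ℝ)
    (hq_meas : Measurable q) (hq_pos : ∀ x, 0 < q x)
    (hp_cont : Continuous p) (hp_pos : ∀ x, 0 < p x)
    (T S : EuclideanSpace ℝ (Fin d) → EuclideanSpace ℝ (Fin d))
    (hT : ContDiff ℝ 1 T) (hS : ContDiff ℝ 1 S)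
    (hST : Function.LeftInverse S T) (hTS : Function.RightInverse S T)
    (hfin₁ : klDiv (densityMeasure q) (densityMeasure p) ≠ ⊤)
    (hfin₂ : klDiv ((densityMeasure q).map T) (densityMeasure p) ≠ ⊤) :
    (klDiv ((densityMeasure q).map T) (densityMeasure p)).toReal
        - (klDiv (densityMeasure q) (densityMeasure p)).toReal
      = ∫ lam, (Real.log (p lam) - Real.log (p (T lam))
          - Real.log |(fderiv ℝ T lam).det|) * q lam := by
  obtain ⟨-, h_int_q⟩ := klDiv_ne_top_iff.mp hfin₁
  obtain ⟨-, h_int_T⟩ := klDiv_ne_top_iff.mp hfin₂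
  have h_int_T_comp : Integrable
      (fun lam => llr ((densityMeasure q).map T) (densityMeasure p) (T lam)) (densityMeasure q) :=
    (integrable_map_measure h_int_T.aestronglyMeasurable hT.continuous.aemeasurable).mp h_int_T
  rw [toReal_klDiv_of_ne_top hfin₁, toReal_klDiv_of_ne_top hfin₂,
    integral_map hT.continuous.aemeasurable h_int_T.aestronglyMeasurable,
    ← integral_sub h_int_T_comp h_int_q]
  refine (integral_congr_ae ?_).trans
    (integral_withDensity_ofReal_eq_integral_mul volume hq_meas (fun x => (hq_pos x).le) _)
  have h_llr_q :=
    (withDensity_absolutelyContinuous volume fun x => ENNReal.ofReal (q x)).ae_eq <|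
      llr_withDensity_ofReal_ae_eq volume hq_meas.aemeasurable hp_cont.aemeasurable
        (ae_of_all _ hq_pos) (ae_of_all _ hp_pos)
  filter_upwards [h_llr_q, llr_map_withDensity_ofReal_comp_ae_eq volume hq_meas
    hp_cont.measurable hq_pos hp_pos (hT.differentiable one_ne_zero)
    (hS.differentiable one_ne_zero) hST hTS] with lam h_q h_T
  unfold densityMeasure
  rw [h_T, h_q]
  ring

/-- For an everywhere positive probability density `q`, an
everywhere positive continuous probability density `p`, and a `C¹`
diffeomorphism `T` of `ℝ^d` (with `C¹` inverse `S`), assuming finiteness of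
the KL divergences and integrability of the integrand,
`KL(T#μ_q ‖ μ_p) − KL(μ_q ‖ μ_p)
  = ∫ (log p(λ) − log p(T λ) − log |det DT(λ)|) q(λ) dλ`. -/
theorem klDiv_pushforward_sub_klDiv_eq {d : ℕ}
    (q p : EuclideanSpace ℝ (Fin d) → ℝ)
    (hq_meas : Measurable q) (hq_pos : ∀ x, 0 < q x)
    (hq_int : ∫ x, q x = 1)
    (hp_cont : Continuous p) (hp_pos : ∀ x, 0 < p x)
    (hp_int : ∫ x, p x = 1)
    (T S : EuclideanSpace ℝ (Fin d) → EuclideanSpace ℝ (Fin d))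
    (hT : ContDiff ℝ 1 T) (hS : ContDiff ℝ 1 S)
    (hST : Function.LeftInverse S T) (hTS : Function.RightInverse S T)
    (hfin₁ : klDiv (densityMeasure q) (densityMeasure p) ≠ ⊤)
    (hfin₂ : klDiv ((densityMeasure q).map T) (densityMeasure p) ≠ ⊤)
    (hint : Integrable (fun lam =>
      (Real.log (p lam) - Real.log (p (T lam))
        - Real.log |(fderiv ℝ T lam).det|) * q lam)) :
    (klDiv ((densityMeasure q).map T) (densityMeasure p)).toReal
        - (klDiv (densityMeasure q) (densityMeasure p)).toReal
      = ∫ lam, (Real.log (p lam) - Real.log (p (T lam))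
          - Real.log |(fderiv ℝ T lam).det|) * q lam :=
  klDiv_pushforward_sub_klDiv_eq_general q p hq_meas hq_pos hp_cont hp_pos T S hT hS hST hTS hfin₁
    hfin₂
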